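/- The graph G2 on vertices u1,...,u8 with edges u1u2, u1u3, u2u3, u2u4, u3u5, u4u5, u4u6, u5u7, u6u7, u6u8, u7u8 (two houses sharing structure as in the paper's Figure 2) admits, up to permutation of the four '2'-colors and the reflection symmetry, a unique (1,2,2,2,2)-packing edge-coloring, namely: color 1 on u2u3, u4u5, u6u7; 2a on u1u2, u5u7; 2b on u1u3, u4u6; 2c on u2u4, u7u8; 2d on u3u5, u6u8. -/
import Mathlib


open SimpleGraph

/-- The distance between two edges: the minimum, over endpoints `a` of `e` and `b` of `f`,
of the vertex distance between `a` and `b` (as an extended natural number,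
`⊤` when no endpoints are connected). -/
noncomputable def edgeDist {V : Type*} (G : SimpleGraph V) (e f : Sym2 V) : ℕ∞ :=
  sInf {d : ℕ∞ | ∃ a ∈ e, ∃ b ∈ f, G.edist a b = d}

/-- An `S`-packing edge-coloring (in the closest-endpoint vertex-distance convention):
a map `c` assigning to each edge a color `i : Fin k` such that any two distinct
same-colored edges are at edge-distance at least `S i`.  A class with `S i = 1` is a
matching, `S i = 2` an induced matching, etc. -/
def IsPackingEdgeColoring {V : Type*} (G : SimpleGraph V) {k : ℕ} (S : Fin k → ℕ)
    (c : Sym2 V → Fin k) : Prop :=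
  ∀ e ∈ G.edgeSet, ∀ f ∈ G.edgeSet, e ≠ f → c e = c f →
    (S (c e) : ℕ∞) ≤ edgeDist G e f

/-- The graph $G_2$ (vertex $u_{i+1}$ = `i : Fin 8`). -/
def G2 : SimpleGraph (Fin 8) :=
  SimpleGraph.fromRel (fun a b =>
    (a, b) ∈ ([(0,1),(0,2),(1,2),(1,3),(2,4),(3,4),(3,5),(4,6),(5,6),(5,7),(6,7)] :
      List (Fin 8 × Fin 8)))

/-- The reflection symmetry of $G_2$: $u_1 ↔ u_8, u_2 ↔ u_7, u_3 ↔ u_6, u_4 ↔ u_5$. -/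
def g2Refl : Fin 8 → Fin 8 := ![7, 6, 5, 4, 3, 2, 1, 0]

/-- The distinguished coloring $g$ of $G_2$: color `0` (matching) on $u_2u_3, u_4u_5, u_6u_7$;
`1` on $u_1u_2, u_5u_7$; `2` on $u_1u_3, u_4u_6$; `3` on $u_2u_4, u_7u_8$;
`4` on $u_3u_5, u_6u_8$. -/
def gcol : Sym2 (Fin 8) → Fin 5 := fun e =>
  if e = s(1,2) ∨ e = s(3,4) ∨ e = s(5,6) then 0
  else if e = s(0,1) ∨ e = s(4,6) then 1
  else if e = s(0,2) ∨ e = s(3,5) then 2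
  else if e = s(1,3) ∨ e = s(6,7) then 3
  else 4

/-! ### Auxiliary machinery -/

instance g2DecAdj : DecidableRel G2.Adj := fun a b =>
  decidable_of_iff _ (SimpleGraph.fromRel_adj _ a b).symm

/-- The eleven edges of `G2`. -/
def EL : List (Sym2 (Fin 8)) :=
  [s(0,1), s(0,2), s(1,2), s(1,3), s(2,4), s(3,4), s(3,5), s(4,6), s(5,6), s(5,7), s(6,7)]

def C0 : List (Nat × Nat) := [(0, 1), (0, 2), (1, 2), (0, 3), (2, 3), (1, 4), (2, 4), (3, 5), (4, 5), (3, 6), (5, 6), (4, 7), (5, 7), (6, 8), (7, 8), (6, 9), (8, 9), (7, 10), (8, 10), (9, 10)]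
def C1 : List (Nat × Nat) := [(1, 3), (0, 4), (3, 4), (0, 5), (1, 5), (2, 5), (0, 6), (2, 6), (4, 6), (1, 7), (2, 7), (3, 7), (6, 7), (3, 8), (4, 8), (5, 8), (3, 9), (5, 9), (7, 9), (4, 10), (5, 10), (6, 10)]
def GT : List (Fin 5) := [1, 2, 0, 3, 4, 0, 2, 1, 0, 4, 3]
def SOLS : List (List (Fin 5) × List (Fin 5)) :=
  [([1, 2, 0, 3, 4, 0, 2, 1, 0, 4, 3], [0, 1, 2, 3, 4]),
   ([1, 2, 0, 4, 3, 0, 2, 1, 0, 3, 4], [0, 1, 2, 4, 3]),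
   ([1, 3, 0, 2, 4, 0, 3, 1, 0, 4, 2], [0, 1, 3, 2, 4]),
   ([1, 3, 0, 4, 2, 0, 3, 1, 0, 2, 4], [0, 1, 4, 2, 3]),
   ([1, 4, 0, 2, 3, 0, 4, 1, 0, 3, 2], [0, 1, 3, 4, 2]),
   ([1, 4, 0, 3, 2, 0, 4, 1, 0, 2, 3], [0, 1, 4, 3, 2]),
   ([2, 1, 0, 3, 4, 0, 1, 2, 0, 4, 3], [0, 2, 1, 3, 4]),
   ([2, 1, 0, 4, 3, 0, 1, 2, 0, 3, 4], [0, 2, 1, 4, 3]),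
   ([2, 3, 0, 1, 4, 0, 3, 2, 0, 4, 1], [0, 3, 1, 2, 4]),
   ([2, 3, 0, 4, 1, 0, 3, 2, 0, 1, 4], [0, 4, 1, 2, 3]),
   ([2, 4, 0, 1, 3, 0, 4, 2, 0, 3, 1], [0, 3, 1, 4, 2]),
   ([2, 4, 0, 3, 1, 0, 4, 2, 0, 1, 3], [0, 4, 1, 3, 2]),
   ([3, 1, 0, 2, 4, 0, 1, 3, 0, 4, 2], [0, 2, 3, 1, 4]),
   ([3, 1, 0, 4, 2, 0, 1, 3, 0, 2, 4], [0, 2, 4, 1, 3]),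
   ([3, 2, 0, 1, 4, 0, 2, 3, 0, 4, 1], [0, 3, 2, 1, 4]),
   ([3, 2, 0, 4, 1, 0, 2, 3, 0, 1, 4], [0, 4, 2, 1, 3]),
   ([3, 4, 0, 1, 2, 0, 4, 3, 0, 2, 1], [0, 3, 4, 1, 2]),
   ([3, 4, 0, 2, 1, 0, 4, 3, 0, 1, 2], [0, 4, 3, 1, 2]),
   ([4, 1, 0, 2, 3, 0, 1, 4, 0, 3, 2], [0, 2, 3, 4, 1]),
   ([4, 1, 0, 3, 2, 0, 1, 4, 0, 2, 3], [0, 2, 4, 3, 1]),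
   ([4, 2, 0, 1, 3, 0, 2, 4, 0, 3, 1], [0, 3, 2, 4, 1]),
   ([4, 2, 0, 3, 1, 0, 2, 4, 0, 1, 3], [0, 4, 2, 3, 1]),
   ([4, 3, 0, 1, 2, 0, 3, 4, 0, 2, 1], [0, 3, 4, 2, 1]),
   ([4, 3, 0, 2, 1, 0, 3, 4, 0, 1, 2], [0, 4, 3, 2, 1])]

def pairOK (i j : Nat) (a b : Fin 5) : Bool :=
  !(a == b) || (!(decide ((i,j) ∈ C0)) && (a == 0 || !(decide ((i,j) ∈ C1))))

def okNew (cs : List (Fin 5)) (x : Fin 5) : Bool :=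
  (List.range cs.length).all fun i => pairOK i cs.length (cs.getD i 0) x

def allSat : ℕ → List (Fin 5) → Prop
  | 0, cs => ∃ p ∈ SOLS, p.1 = cs
  | n+1, cs => ∀ x : Fin 5, okNew cs x = true → allSat n (cs ++ [x])

instance allSatDec : (n : ℕ) → (cs : List (Fin 5)) → Decidable (allSat n cs)
  | 0, _ => inferInstanceAs (Decidable (∃ _ ∈ _, _))
  | n+1, cs =>
    haveI : ∀ x : Fin 5, Decidable (allSat n (cs ++ [x])) := fun _ => allSatDec n _
    inferInstanceAs (Decidable (∀ x : Fin 5, okNew cs x = true → allSat n (cs ++ [x])))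

set_option maxRecDepth 100000 in
set_option maxHeartbeats 4000000 in
theorem key : allSat 11 [] := by decide

theorem solsig : ∀ p ∈ SOLS, Function.Bijective (fun x : Fin 5 => p.2.getD x.1 0) ∧
    p.2.getD 0 0 = 0 ∧ ∀ i < 11, p.2.getD (p.1.getD i 0).1 0 = GT.getD i 0 := by decide

theorem C0sem : ∀ q ∈ C0, ∃ v, v ∈ EL.getD q.1 default ∧ v ∈ EL.getD q.2 default := by decide

theorem C1sem : ∀ q ∈ C1, ∃ u ∈ EL.getD q.1 default, ∃ v ∈ EL.getD q.2 default,
    G2.Adj u v := by decide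

theorem ELsub : ∀ e ∈ EL, e ∈ G2.edgeSet := by decide

theorem ELmem' : ∀ i < 11, EL.getD i default ∈ EL := by decide

theorem ELne : ∀ i < 11, ∀ j < 11, i ≠ j → EL.getD i default ≠ EL.getD j default := by decide

theorem ELgcol : ∀ i < 11, gcol (EL.getD i default) = GT.getD i 0 := by decide

theorem mem_EL : ∀ e ∈ G2.edgeSet, e ∈ EL := by
  have h : ∀ a b : Fin 8, G2.Adj a b → s(a,b) ∈ EL := by decide
  intro e
  induction e with
  | _ a b => exact fun he => h a b (G2.mem_edgeSet.mp he)

theorem edgeDist_le {V : Type*} (G : SimpleGraph V) {e f : Sym2 V} {a b : V}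
    (ha : a ∈ e) (hb : b ∈ f) : edgeDist G e f ≤ G.edist a b :=
  sInf_le ⟨a, ha, b, hb, rfl⟩

theorem one_le_edgeDist {V : Type*} {G : SimpleGraph V} {e f : Sym2 V}
    (h : ∀ a ∈ e, ∀ b ∈ f, a ≠ b) : 1 ≤ edgeDist G e f := by
  refine le_sInf ?_
  rintro d ⟨a, ha, b, hb, rfl⟩
  rw [ENat.one_le_iff_ne_zero]
  simpa [SimpleGraph.edist_eq_zero_iff] using h a ha b hb

theorem two_le_edgeDist {V : Type*} {G : SimpleGraph V} {e f : Sym2 V}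
    (h : ∀ a ∈ e, ∀ b ∈ f, a ≠ b ∧ ¬ G.Adj a b) : 2 ≤ edgeDist G e f := by
  refine le_sInf ?_
  rintro d ⟨a, ha, b, hb, rfl⟩
  obtain ⟨hne, hadj⟩ := h a ha b hb
  have h0 : G.edist a b ≠ 0 := by simpa [SimpleGraph.edist_eq_zero_iff] using hne
  have h1 : G.edist a b ≠ 1 := fun hh => hadj (SimpleGraph.edist_eq_one_iff_adj.mp hh)
  generalize hd : G.edist a b = d at h0 h1 ⊢
  induction d using ENat.recTopCoe with
  | top => exact le_top
  | coe n =>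
    have hn0 : n ≠ 0 := by exact_mod_cast h0
    have hn1 : n ≠ 1 := by exact_mod_cast h1
    exact_mod_cast Nat.cast_le.mpr (by omega : 2 ≤ n)

theorem POSL : ∀ e ∈ EL, ∀ f ∈ EL, e ≠ f → gcol e = gcol f →
    (gcol e = 0 → ∀ a ∈ e, ∀ b ∈ f, a ≠ b) ∧
    (gcol e ≠ 0 → ∀ a ∈ e, ∀ b ∈ f, a ≠ b ∧ ¬ G2.Adj a b) := by decide

theorem pairOK_of (i j : Nat) (a b : Fin 5)
    (h : a = b → (i,j) ∉ C0 ∧ (a ≠ 0 → (i,j) ∉ C1)) : pairOK i j a b = true := by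
  by_cases hab : a = b
  · obtain ⟨h0, h1⟩ := h hab
    subst hab
    by_cases ha : a = 0
    · simp [pairOK, h0, ha]
    · simp [pairOK, h0, ha, h1 ha]
  · simp [pairOK, hab]

theorem bridge : ∀ (ext cs : List (Fin 5)), allSat ext.length cs →
    (∀ pre x post, cs ++ ext = pre ++ x :: post → cs.length ≤ pre.length →
      okNew pre x = true) →
    ∃ p ∈ SOLS, p.1 = cs ++ ext := by
  intro ext
  induction ext with
  | nil =>
    intro cs h _
    rw [List.append_nil]
    exact h
  | cons x ext ih =>
    intro cs h hok
    have hx : okNew cs x = true := hok cs x ext rfl le_rfl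
    have h2 : allSat ext.length (cs ++ [x]) := h x hx
    have h3 := ih (cs ++ [x]) h2 ?_
    · simpa using h3
    · intro pre y post heq hlen
      refine hok pre y post ?_ ?_
      · rw [← heq]; simp
      · simp only [List.length_append, List.length_singleton] at hlen; omega

theorem S_ge_one : ∀ x : Fin 5, (1 : ℕ) ≤ ![1,2,2,2,2] x := by decide
theorem S_eq_two : ∀ x : Fin 5, x ≠ 0 → (![1,2,2,2,2] : Fin 5 → ℕ) x = 2 := by decide

/-- $G_2$ admits, up to permutation of the four 2-colors and the reflection symmetry,
a unique $(1,2^4)$-packing edge-coloring, namely `gcol`. -/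
theorem stmt6 :
    IsPackingEdgeColoring G2 ![1,2,2,2,2] gcol ∧
    (∀ c : Sym2 (Fin 8) → Fin 5, IsPackingEdgeColoring G2 ![1,2,2,2,2] c →
      ∃ σ : Equiv.Perm (Fin 5), σ 0 = 0 ∧
        ((∀ e ∈ G2.edgeSet, σ (c e) = gcol e) ∨
         (∀ e ∈ G2.edgeSet, σ (c (e.map g2Refl)) = gcol e))) := by
  constructor
  · -- gcol is a packing edge-coloring
    intro e he f hf hne hcc
    obtain ⟨h0, h1⟩ := POSL e (mem_EL e he) f (mem_EL f hf) hne hcc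
    by_cases hz : gcol e = 0
    · rw [hz]
      exact le_trans (by norm_num) (one_le_edgeDist (h0 hz))
    · rw [S_eq_two _ hz]
      exact_mod_cast two_le_edgeDist (h1 hz)
  · -- uniqueness
    intro c hc
    set cs : List (Fin 5) := EL.map c with hcs
    have hlen : cs.length = 11 := by simp [hcs, EL]
    have hck : ∀ k, k < 11 → cs.getD k 0 = c (EL.getD k default) := by
      intro k hk
      rw [hcs, List.getD_eq_getElem _ _ (by simpa [EL] using hk), List.getElem_map,
        List.getD_eq_getElem _ _ (by simpa [EL] using hk)]
    have hgood : ∀ pre x post, ([] : List (Fin 5)) ++ cs = pre ++ x :: post →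
        (([] : List (Fin 5))).length ≤ pre.length → okNew pre x = true := by
      intro pre x post heq _
      simp only [List.nil_append] at heq
      have hlens : pre.length + (post.length + 1) = 11 := by
        have := congrArg List.length heq
        simp [hlen] at this
        omega
      set j := pre.length with hj
      have hjlt : j < 11 := by omega
      have hxj : x = cs.getD j 0 := by
        rw [heq, List.getD_append_right _ _ _ _ le_rfl]
        simp
      rw [okNew, List.all_eq_true]
      intro i hi
      have hilt : i < pre.length := List.mem_range.mp hi
      have hgi : pre.getD i 0 = cs.getD i 0 := by
        rw [heq, List.getD_append _ _ _ _ hilt]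
      rw [show pre.length = j from rfl]
      apply pairOK_of
      intro hab
      -- same colors on edges i and j
      have hilt11 : i < 11 := by omega
      have hei : EL.getD i default ∈ G2.edgeSet :=
        ELsub _ (ELmem' i hilt11)
      have hej : EL.getD j default ∈ G2.edgeSet :=
        ELsub _ (ELmem' j hjlt)
      have hneij : EL.getD i default ≠ EL.getD j default :=
        ELne i hilt11 j hjlt (by omega)
      have hcij : c (EL.getD i default) = c (EL.getD j default) := by
        rw [← hck i hilt11, ← hck j hjlt, ← hgi, ← hxj, hab]
      have hpack := hc _ hei _ hej hneij hcij
      have hcolval : cs.getD i 0 = c (EL.getD i default) := hck i hilt11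
      constructor
      · intro hC0
        exfalso
        obtain ⟨v, hv1, hv2⟩ := C0sem (i, j) hC0
        have hle : edgeDist G2 (EL.getD i default) (EL.getD j default) ≤ 0 := by
          have := edgeDist_le G2 hv1 hv2
          simpa [SimpleGraph.edist_self] using this
        have h1le : (1 : ℕ∞) ≤ ((![1,2,2,2,2] (c (EL.getD i default)) : ℕ) : ℕ∞) := by
          exact_mod_cast S_ge_one (c (EL.getD i default))
        have := le_trans h1le (le_trans hpack hle)
        simp at this
      · intro ha0 hC1
        exfalso
        obtain ⟨u, hu, v, hv, huv⟩ := C1sem (i, j) hC1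
        have hle : edgeDist G2 (EL.getD i default) (EL.getD j default) ≤ 1 := by
          have := edgeDist_le G2 hu hv
          rwa [SimpleGraph.edist_eq_one_iff_adj.mpr huv] at this
        have hs2 : (![1,2,2,2,2] : Fin 5 → ℕ) (c (EL.getD i default)) = 2 := by
          apply S_eq_two
          rw [← hcolval, ← hgi]
          exact ha0
        rw [hs2] at hpack
        have := le_trans hpack hle
        norm_num at this
    obtain ⟨p, hp, hps⟩ := bridge cs [] (hlen ▸ key) hgood
    simp only [List.nil_append] at hps
    obtain ⟨hbij, h00, hGT⟩ := solsig p hp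
    refine ⟨Equiv.ofBijective _ hbij, h00, Or.inl ?_⟩
    intro e he
    obtain ⟨i, hi, hei⟩ := List.mem_iff_getElem.mp (mem_EL e he)
    have hi11 : i < 11 := by simpa [EL] using hi
    have hce : c e = cs.getD i 0 := by
      rw [← hei, hck i hi11, List.getD_eq_getElem _ _ (show i < EL.length by simpa [EL] using hi11)]
    have hge : gcol e = GT.getD i 0 := by
      rw [← hei, ← ELgcol i hi11, List.getD_eq_getElem _ _ (show i < EL.length by simpa [EL] using hi11)]
    show p.2.getD (c e).1 0 = gcol e
    rw [hce, hge, ← hps]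
    exact hGT i hi11
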